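/- Let S, T1, T2 be subspaces of a finite-dimensional complex Hilbert space such that at least two of the three commutation relations S C T1, S C T2, T1 C T2 hold. Then the distributive laws hold: S ∧ (T1 ∨ T2) = (S ∧ T1) ∨ (S ∧ T2) and S ∨ (T1 ∧ T2) = (S ∨ T1) ∧ (S ∨ T2). -/

import Mathlib

/-!
`S C T` says exactly that the orthogonal projections onto `S` and `T` commute. If `P_S`
commutes with `P_T₁` and `P_T₂`, then `P_S` splits any `t₁ + t₂ ∈ S` into parts in `S ⊓ T₁`
and `S ⊓ T₂`; if `P_S` commutes with `P_T₁` and `P_T₁` with `P_T₂`, then `P_T₁` splits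
`x = t₁ + t₂ ∈ S` into `P_T₁ x ∈ S ⊓ T₁` and `x - P_T₁ x = t₂ - P_T₁ t₂ ∈ S ⊓ T₂`. The third
case is the second with `T₁` and `T₂` swapped. Commutation of projections passes to
orthocomplements, so the join law is the meet law for `Sᗮ, T₁ᗮ, T₂ᗮ`.
-/

/-- Two subspaces commute: `S C T` iff `S = (S ⊓ T) ⊔ (S ⊓ Tᗮ)`. -/
def SubspaceCommute {H : Type*} [NormedAddCommGroup H] [InnerProductSpace ℂ H]
    (S T : Submodule ℂ H) : Prop :=
  S = (S ⊓ T) ⊔ (S ⊓ Tᗮ)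

namespace Submodule

variable {𝕜 E : Type*} [RCLike 𝕜] [NormedAddCommGroup E] [InnerProductSpace 𝕜 E]
  {S T T₁ T₂ : Submodule 𝕜 E}

theorem starProjection_mem_inf_of_commute [S.HasOrthogonalProjection] [T.HasOrthogonalProjection]
    (h : Commute S.starProjection T.starProjection) {v : E} (hv : v ∈ T) :
    S.starProjection v ∈ S ⊓ T := by
  have hfix : T.starProjection (S.starProjection v) = S.starProjection v :=
    calc T.starProjection (S.starProjection v)
        _ = S.starProjection (T.starProjection v) := (DFunLike.congr_fun h.eq v).symm
        _ = S.starProjection v := by rw [starProjection_eq_self_iff.2 hv]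
  exact ⟨S.starProjection_apply_mem v, hfix ▸ T.starProjection_apply_mem _⟩

theorem commute_starProjection_orthogonal [S.HasOrthogonalProjection] [T.HasOrthogonalProjection]
    (h : Commute S.starProjection T.starProjection) :
    Commute Sᗮ.starProjection Tᗮ.starProjection := by
  rw [starProjection_orthogonal', starProjection_orthogonal']
  exact (Commute.one_right _).sub_right ((Commute.one_left _).sub_left h)

theorem orthogonal_inf [S.HasOrthogonalProjection] [T.HasOrthogonalProjection]
    [(Sᗮ ⊔ Tᗮ).HasOrthogonalProjection] : (S ⊓ T)ᗮ = Sᗮ ⊔ Tᗮ := by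
  conv_lhs => rw [← S.orthogonal_orthogonal, ← T.orthogonal_orthogonal, inf_orthogonal]
  exact orthogonal_orthogonal _

theorem inf_sup_left_of_commute_both [S.HasOrthogonalProjection] [T₁.HasOrthogonalProjection]
    [T₂.HasOrthogonalProjection] (h₁ : Commute S.starProjection T₁.starProjection)
    (h₂ : Commute S.starProjection T₂.starProjection) :
    S ⊓ (T₁ ⊔ T₂) = S ⊓ T₁ ⊔ S ⊓ T₂ := by
  refine le_antisymm (fun x ⟨hxS, hxT⟩ => ?_) le_inf_sup
  obtain ⟨t₁, ht₁, t₂, ht₂, rfl⟩ := mem_sup.1 hxT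
  rw [← starProjection_eq_self_iff.2 hxS, map_add]
  exact add_mem_sup (starProjection_mem_inf_of_commute h₁ ht₁)
    (starProjection_mem_inf_of_commute h₂ ht₂)

theorem inf_sup_left_of_commute_of_commute [S.HasOrthogonalProjection]
    [T₁.HasOrthogonalProjection] [T₂.HasOrthogonalProjection]
    (hS : Commute S.starProjection T₁.starProjection)
    (h₁₂ : Commute T₁.starProjection T₂.starProjection) :
    S ⊓ (T₁ ⊔ T₂) = S ⊓ T₁ ⊔ S ⊓ T₂ := by
  refine le_antisymm (fun x ⟨hxS, hxT⟩ => ?_) le_inf_sup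
  obtain ⟨t₁, ht₁, t₂, ht₂, rfl⟩ := mem_sup.1 hxT
  have hST₁ := starProjection_mem_inf_of_commute hS.symm hxS
  have hT₁T₂ := starProjection_mem_inf_of_commute h₁₂ ht₂
  have hrest : t₁ + t₂ - T₁.starProjection (t₁ + t₂) = t₂ - T₁.starProjection t₂ := by
    rw [map_add, starProjection_eq_self_iff.2 ht₁]
    abel
  refine mem_sup.2 ⟨_, ⟨hST₁.2, hST₁.1⟩, _, ⟨S.sub_mem hxS hST₁.2, ?_⟩, add_sub_cancel _ _⟩
  exact hrest ▸ T₂.sub_mem ht₂ hT₁T₂.2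

theorem inf_sup_left_of_two_commute [S.HasOrthogonalProjection] [T₁.HasOrthogonalProjection]
    [T₂.HasOrthogonalProjection]
    (h : (Commute S.starProjection T₁.starProjection ∧
          Commute S.starProjection T₂.starProjection) ∨
        (Commute S.starProjection T₁.starProjection ∧
          Commute T₁.starProjection T₂.starProjection) ∨
        (Commute S.starProjection T₂.starProjection ∧
          Commute T₁.starProjection T₂.starProjection)) :
    S ⊓ (T₁ ⊔ T₂) = S ⊓ T₁ ⊔ S ⊓ T₂ := by
  rcases h with ⟨h₁, h₂⟩ | ⟨h₁, h₁₂⟩ | ⟨h₂, h₁₂⟩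
  · exact inf_sup_left_of_commute_both h₁ h₂
  · exact inf_sup_left_of_commute_of_commute h₁ h₁₂
  · rw [sup_comm T₁, sup_comm (S ⊓ T₁)]
    exact inf_sup_left_of_commute_of_commute h₂ h₁₂.symm

theorem sup_inf_left_of_two_commute [FiniteDimensional 𝕜 E]
    (h : (Commute S.starProjection T₁.starProjection ∧
          Commute S.starProjection T₂.starProjection) ∨
        (Commute S.starProjection T₁.starProjection ∧
          Commute T₁.starProjection T₂.starProjection) ∨
        (Commute S.starProjection T₂.starProjection ∧
          Commute T₁.starProjection T₂.starProjection)) :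
    S ⊔ T₁ ⊓ T₂ = (S ⊔ T₁) ⊓ (S ⊔ T₂) := by
  have hc : ∀ {A B : Submodule 𝕜 E}, Commute A.starProjection B.starProjection →
      Commute Aᗮ.starProjection Bᗮ.starProjection := commute_starProjection_orthogonal
  have hperp := inf_sup_left_of_two_commute (S := Sᗮ) (T₁ := T₁ᗮ) (T₂ := T₂ᗮ) <|
    h.imp (And.imp hc hc) (Or.imp (And.imp hc hc) (And.imp hc hc))
  rw [← orthogonal_inf, inf_orthogonal, inf_orthogonal, inf_orthogonal, ← orthogonal_inf]
    at hperp
  simpa only [orthogonal_orthogonal] using congrArg (fun K : Submodule 𝕜 E => Kᗮ) hperp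

end Submodule

section SubspaceCommute

variable {H : Type*} [NormedAddCommGroup H] [InnerProductSpace ℂ H] {S T : Submodule ℂ H}

open Submodule in
theorem subspaceCommute_iff_mem_invtSubmodule [T.HasOrthogonalProjection] :
    SubspaceCommute S T ↔ S ∈ Module.End.invtSubmodule (T.starProjection : H →ₗ[ℂ] H) := by
  rw [Module.End.mem_invtSubmodule_iff_forall_mem_of_mem]
  constructor
  · intro h x hx
    rw [h] at hx
    obtain ⟨u, hu, v, hv, rfl⟩ := mem_sup.1 hx
    rw [ContinuousLinearMap.coe_coe, map_add, starProjection_eq_self_iff.2 hu.2,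
      (T.starProjection_apply_eq_zero_iff).2 hv.2, add_zero]
    exact hu.1
  · refine fun h => le_antisymm (fun x hx => ?_) (sup_le inf_le_left inf_le_left)
    have hP : T.starProjection x ∈ S := h x hx
    exact mem_sup.2 ⟨_, ⟨hP, T.starProjection_apply_mem x⟩, _,
      ⟨S.sub_mem hx hP, T.sub_starProjection_mem_orthogonal x⟩, add_sub_cancel _ _⟩

open Submodule in
theorem subspaceCommute_iff_commute [S.HasOrthogonalProjection] [T.HasOrthogonalProjection] :
    SubspaceCommute S T ↔ Commute S.starProjection T.starProjection := by
  rw [ContinuousLinearMap.IsIdempotentElem.commute_iff S.isIdempotentElem_starProjection,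
    range_starProjection, ker_starProjection, subspaceCommute_iff_mem_invtSubmodule]
  exact (and_iff_left_of_imp
    T.starProjection_isSymmetric.orthogonalComplement_mem_invtSubmodule).symm

end SubspaceCommute

/-- If at least two of `S C T₁`, `S C T₂`, `T₁ C T₂` hold, then the distributive
laws hold: `S ⊓ (T₁ ⊔ T₂) = (S ⊓ T₁) ⊔ (S ⊓ T₂)` and
`S ⊔ (T₁ ⊓ T₂) = (S ⊔ T₁) ⊓ (S ⊔ T₂)`. -/
theorem distrib_of_two_commute {H : Type*} [NormedAddCommGroup H]
    [InnerProductSpace ℂ H] [FiniteDimensional ℂ H] (S T₁ T₂ : Submodule ℂ H)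
    (h : (SubspaceCommute S T₁ ∧ SubspaceCommute S T₂) ∨
         (SubspaceCommute S T₁ ∧ SubspaceCommute T₁ T₂) ∨
         (SubspaceCommute S T₂ ∧ SubspaceCommute T₁ T₂)) :
    S ⊓ (T₁ ⊔ T₂) = (S ⊓ T₁) ⊔ (S ⊓ T₂) ∧
    S ⊔ (T₁ ⊓ T₂) = (S ⊔ T₁) ⊓ (S ⊔ T₂) := by
  simp only [subspaceCommute_iff_commute] at h
  exact ⟨Submodule.inf_sup_left_of_two_commute h, Submodule.sup_inf_left_of_two_commute h⟩
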